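/- Let G be a graph, let Q be a collection of maximum cliques of G such that X_Q is connected, and suppose ω(G) ≥ (2/3)(Δ(G)+1). Then either ⋂Q ≠ ∅, or the following holds: X_Q has maximum degree at most 2, and whenever B and C are distinct neighbors of A in X_Q, we have B ∩ C = ∅ and |A ∩ B| = |A ∩ C| = ω(G)/2. -/

import Mathlib

open SimpleGraph

/-- The intersection graph `X_Q` of a collection `Q` of cliques. -/
def interGraph {V : Type*} [DecidableEq V] (Q : Finset (Finset V)) :
    SimpleGraph {s // s ∈ Q} where
  Adj A B := A ≠ B ∧ ((A : Finset V) ∩ (B : Finset V)).Nonempty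
  symm := by
    constructor
    rintro A B ⟨hne, h⟩
    exact ⟨hne.symm, by rwa [Finset.inter_comm]⟩
  loopless := by constructor; rintro A ⟨hne, -⟩; exact hne rfl

instance {V : Type*} [DecidableEq V] (Q : Finset (Finset V)) :
    DecidableRel (interGraph Q).Adj := fun _ _ => inferInstanceAs (Decidable (_ ∧ _))

/-!
Two maximum cliques that meet span at most `Δ + 1` vertices, so they share at least `ω / 2`
vertices; consequently three pairwise meeting cliques share a vertex. Take a largest subfamily
`R ⊆ Q` with a common vertex and let `K = ⋂ R`. If `R ≠ Q`, connectivity of `X_Q` gives a clique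
`S ∉ R` that meets `R` but misses `K`. Hajnal's inequality `|⋂ R| + |⋃ R| ≥ 2ω` then forces
`|K| = ω / 2`, and the sets `T \ K` (`T ∈ R`) become halves of the `ω`-set `⋃ R \ K`, each inside
`S` or disjoint from it, so `|R| ≤ 2`. Hence `X_Q` is triangle-free, and any two neighbours of a
clique `A` cut it into two disjoint halves.
-/

open Finset

lemma Finset.eq_sdiff_of_disjoint_of_card_le_add {α : Type*} [DecidableEq α] {W Y Z : Finset α}
    (hY : Y ⊆ W) (hZ : Z ⊆ W) (hYZ : Disjoint Y Z) (hW : #W ≤ #Y + #Z) : Z = W \ Y :=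
  eq_of_subset_of_card_le (subset_sdiff.2 ⟨hZ, hYZ.symm⟩)
    (by rw [card_sdiff_of_subset hY]; omega)

lemma Finset.eq_or_eq_of_subset_or_disjoint {α : Type*} [DecidableEq α] {W S X Y Z : Finset α}
    {m : ℕ} (hW : #W ≤ 2 * m) (hXW : X ⊆ W) (hYW : Y ⊆ W) (hZW : Z ⊆ W) (hXS : X ⊆ S)
    (hYS : Disjoint Y S) (hX : #X = m) (hY : #Y = m) (hZ : #Z = m)
    (hZS : Z ⊆ S ∨ Disjoint Z S) : Z = X ∨ Z = Y := by
  rcases hZS with hZS | hZS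
  · left
    rw [eq_sdiff_of_disjoint_of_card_le_add hYW hZW (hYS.mono_right hZS) (by omega),
      eq_sdiff_of_disjoint_of_card_le_add hYW hXW (hYS.mono_right hXS) (by omega)]
  · right
    rw [eq_sdiff_of_disjoint_of_card_le_add hXW hZW (hZS.mono_right hXS).symm (by omega),
      eq_sdiff_of_disjoint_of_card_le_add hXW hYW (hYS.mono_right hXS).symm (by omega)]

namespace SimpleGraph

variable {V : Type*} [Fintype V] [DecidableEq V] {G : SimpleGraph V}

lemma card_le_maxDegree_add_one_of_forall_adj [DecidableRel G.Adj] {t : Finset V} {v : V}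
    (h : ∀ u ∈ t, u ≠ v → G.Adj v u) : #t ≤ G.maxDegree + 1 :=
  calc #t ≤ #(insert v (G.neighborFinset v)) := card_le_card fun u hu => by
          rcases eq_or_ne u v with rfl | hne
          · exact mem_insert_self _ _
          · exact mem_insert_of_mem ((G.mem_neighborFinset _ _).2 (h u hu hne))
    _ ≤ G.degree v + 1 := card_insert_le _ _
    _ ≤ G.maxDegree + 1 := by grw [G.degree_le_maxDegree v]

lemma IsNClique.exists_not_adj {s : Finset V} (hs : G.IsNClique G.cliqueNum s) {v : V}
    (hv : v ∉ s) : ∃ u ∈ s, ¬G.Adj v u := by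
  by_contra! h
  have hclique : G.IsClique (insert v s : Finset V) := by
    rw [coe_insert]
    exact hs.isClique.insert fun u hu _ => h u hu
  have := hclique.card_le_cliqueNum
  rw [card_insert_of_notMem hv, hs.card_eq] at this
  omega

lemma adj_of_mem_inf_of_mem_sup {R : Finset (Finset V)} (hR : ∀ T ∈ R, G.IsClique (T : Set V))
    {u v : V} (hv : v ∈ R.inf id) (hu : u ∈ R.sup id) (hne : u ≠ v) : G.Adj v u := by
  obtain ⟨T, hT, huT⟩ := mem_sup.1 hu
  exact hR T hT (mem_inf.1 hv T hT) huT hne.symm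

lemma card_sup_le_maxDegree_add_one [DecidableRel G.Adj] {R : Finset (Finset V)}
    (hR : ∀ T ∈ R, G.IsClique (T : Set V)) (hK : (R.inf id).Nonempty) :
    #(R.sup id) ≤ G.maxDegree + 1 :=
  card_le_maxDegree_add_one_of_forall_adj fun _ hu hne =>
    adj_of_mem_inf_of_mem_sup hR hK.choose_spec hu hne

lemma cliqueNum_le_two_mul_card_inter [DecidableRel G.Adj]
    (hω : 2 * (G.maxDegree + 1) ≤ 3 * G.cliqueNum) {S T : Finset V}
    (hS : G.IsNClique G.cliqueNum S) (hT : G.IsNClique G.cliqueNum T) (hST : (S ∩ T).Nonempty) :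
    G.cliqueNum ≤ 2 * #(S ∩ T) := by
  obtain ⟨v, hv⟩ := hST
  rw [mem_inter] at hv
  have hunion : #(S ∪ T) ≤ G.maxDegree + 1 := by
    refine card_le_maxDegree_add_one_of_forall_adj (v := v) fun u hu hne => ?_
    rcases mem_union.1 hu with hu | hu
    · exact hS.isClique hv.1 hu hne.symm
    · exact hT.isClique hv.2 hu hne.symm
  have := card_union_add_card_inter S T
  rw [hS.card_eq, hT.card_eq] at this
  omega

lemma isClique_inf_union_inter_sup {R : Finset (Finset V)} (hR : ∀ T ∈ R, G.IsClique (T : Set V))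
    (hRne : R.Nonempty) {A : Finset V} (hA : G.IsClique (A : Set V)) :
    G.IsClique (R.inf id ∪ A ∩ R.sup id : Finset V) := by
  obtain ⟨T₀, hT₀⟩ := hRne
  have hKT₀ : R.inf id ⊆ T₀ := inf_le (f := id) hT₀
  intro x hx y hy hne
  simp only [coe_union, coe_inter, Set.mem_union, Set.mem_inter_iff, mem_coe] at hx hy
  rcases hx with hx | hx <;> rcases hy with hy | hy
  · exact hR T₀ hT₀ (hKT₀ hx) (hKT₀ hy) hne
  · exact adj_of_mem_inf_of_mem_sup hR hx hy.2 hne.symm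
  · exact (adj_of_mem_inf_of_mem_sup hR hy hx.2 hne).symm
  · exact hA hx.1 hy.1 hne

theorem two_mul_cliqueNum_le_card_inf_add_card_sup {R : Finset (Finset V)} (hRne : R.Nonempty)
    (hR : ∀ T ∈ R, G.IsNClique G.cliqueNum T) :
    2 * G.cliqueNum ≤ #(R.inf id) + #(R.sup id) := by
  induction hRne using Nonempty.cons_induction with
  | singleton A =>
    simp [(hR A (mem_singleton_self A)).card_eq, two_mul]
  | cons A R hA hRne ih =>
    have hAω := hR A (mem_cons_self A R)
    have hRω : ∀ T ∈ R, G.IsNClique G.cliqueNum T := fun T hT => hR T (mem_cons_of_mem hT)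
    rw [inf_cons, sup_cons, id, inf_eq_inter, sup_eq_union, inter_comm]
    have hKU : R.inf id ⊆ R.sup id :=
      (inf_le (f := id) hRne.choose_spec).trans (le_sup (f := id) hRne.choose_spec)
    have hclique := (isClique_inf_union_inter_sup (fun T hT => (hRω T hT).isClique) hRne
      hAω.isClique).card_le_cliqueNum
    have h₁ := card_union_add_card_inter (R.inf id) (A ∩ R.sup id)
    have h₂ := card_union_add_card_inter A (R.sup id)
    rw [← inter_assoc, inter_right_comm, inter_eq_left.2 hKU] at h₁
    rw [hAω.card_eq] at h₂
    have := ih hRω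
    omega

lemma inter_inter_nonempty_of_pairwise [DecidableRel G.Adj]
    (hω : 2 * (G.maxDegree + 1) ≤ 3 * G.cliqueNum) {A B C : Finset V}
    (hA : G.IsNClique G.cliqueNum A) (hB : G.IsNClique G.cliqueNum B)
    (hC : G.IsNClique G.cliqueNum C) (hAB : (A ∩ B).Nonempty) (hAC : (A ∩ C).Nonempty)
    (hBC : (B ∩ C).Nonempty) : (A ∩ B ∩ C).Nonempty := by
  obtain ⟨v, hv⟩ := hAB
  by_contra hABC
  have hvC : v ∉ C := fun hvC => hABC ⟨v, mem_inter.2 ⟨hv, hvC⟩⟩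
  rw [mem_inter] at hv
  have hdisj : Disjoint (A ∩ C) (B ∩ C) := by
    rw [disjoint_iff_inter_eq_empty, ← inter_inter_distrib_right]
    exact not_nonempty_iff_eq_empty.1 hABC
  -- `A ∩ C` and `B ∩ C` are disjoint halves of `C`, so `v ∈ A ∩ B` sees all of `C`
  have hcover : B ∩ C = C \ (A ∩ C) := by
    have := cliqueNum_le_two_mul_card_inter hω hA hC hAC
    have := cliqueNum_le_two_mul_card_inter hω hB hC hBC
    exact eq_sdiff_of_disjoint_of_card_le_add inter_subset_right inter_subset_right hdisj
      (by rw [hC.card_eq]; omega)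
  obtain ⟨u, huC, hvu⟩ := hC.exists_not_adj hvC
  have hne : v ≠ u := fun h => hvC (h ▸ huC)
  by_cases huA : u ∈ A
  · exact hvu (hA.isClique hv.1 huA hne)
  · have huB : u ∈ B ∩ C := hcover ▸ mem_sdiff.2 ⟨huC, fun h => huA (mem_inter.1 h).1⟩
    exact hvu (hB.isClique hv.2 (mem_inter.1 huB).1 hne)

lemma sdiff_inf_subset_of_inter_nonempty [DecidableRel G.Adj]
    (hω : 2 * (G.maxDegree + 1) ≤ 3 * G.cliqueNum) {R : Finset (Finset V)}
    (hR : ∀ T ∈ R, G.IsNClique G.cliqueNum T) (hK : (R.inf id).Nonempty) {S : Finset V}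
    (hS : G.IsNClique G.cliqueNum S) (hKS : Disjoint (R.inf id) S) {T : Finset V} (hT : T ∈ R)
    (hTS : (T ∩ S).Nonempty) : 2 * #(R.inf id) = G.cliqueNum ∧ T \ R.inf id ⊆ S := by
  have hKT : R.inf id ⊆ T := inf_le (f := id) hT
  have hU := card_sup_le_maxDegree_add_one (fun T hT => (hR T hT).isClique) hK
  have hKU := two_mul_cliqueNum_le_card_inf_add_card_sup ⟨T, hT⟩ hR
  have hTS_half := cliqueNum_le_two_mul_card_inter hω (hR T hT) hS hTS
  have hdisj : Disjoint (R.inf id) (T ∩ S) := hKS.mono_right inter_subset_right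
  have hsum : #(R.inf id) + #(T ∩ S) ≤ G.cliqueNum := by
    rw [← card_union_of_disjoint hdisj, ← (hR T hT).card_eq]
    exact card_le_card (union_subset hKT inter_subset_left)
  refine ⟨by omega, ?_⟩
  rw [← eq_sdiff_of_disjoint_of_card_le_add hKT inter_subset_left hdisj
    (by rw [(hR T hT).card_eq]; omega)]
  exact inter_subset_right

theorem card_le_two_of_disjoint_inf [DecidableRel G.Adj]
    (hω : 2 * (G.maxDegree + 1) ≤ 3 * G.cliqueNum) {R : Finset (Finset V)}
    (hR : ∀ T ∈ R, G.IsNClique G.cliqueNum T) (hK : (R.inf id).Nonempty) {S : Finset V}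
    (hS : G.IsNClique G.cliqueNum S) (hKS : Disjoint (R.inf id) S) {T₀ : Finset V}
    (hT₀ : T₀ ∈ R) (hT₀S : (T₀ ∩ S).Nonempty) : #R ≤ 2 := by
  set K := R.inf id
  set U := R.sup id
  have hKT : ∀ T ∈ R, K ⊆ T := fun T hT => inf_le (f := id) hT
  have hTU : ∀ T ∈ R, T ⊆ U := fun T hT => le_sup (f := id) hT
  have hU : #U ≤ G.maxDegree + 1 :=
    card_sup_le_maxDegree_add_one (fun T hT => (hR T hT).isClique) hK
  have hKU : 2 * G.cliqueNum ≤ #K + #U := two_mul_cliqueNum_le_card_inf_add_card_sup ⟨T₀, hT₀⟩ hR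
  have hsplit : ∀ T ∈ R, (T ∩ S).Nonempty → 2 * #K = G.cliqueNum ∧ T \ K ⊆ S :=
    fun T hT => sdiff_inf_subset_of_inter_nonempty hω hR hK hS hKS hT
  have hK_half : 2 * #K = G.cliqueNum := (hsplit T₀ hT₀ hT₀S).1
  have hTK : ∀ T ∈ R, #(T \ K) = #K := fun T hT => by
    rw [card_sdiff_of_subset (hKT T hT), (hR T hT).card_eq]; omega
  have hTKW : ∀ T ∈ R, T \ K ⊆ U \ K := fun T hT => sdiff_subset_sdiff (hTU T hT) le_rfl
  have hW : #(U \ K) = G.cliqueNum := by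
    rw [card_sdiff_of_subset ((hKT T₀ hT₀).trans (hTU T₀ hT₀))]; omega
  obtain ⟨T₁, hT₁, hT₁S⟩ : ∃ T ∈ R, Disjoint T S := by
    by_contra! h
    -- otherwise `S = U \ K`, and a vertex of `K` would extend `S`
    have hSW : S = U \ K := (eq_of_subset_of_card_le (fun x hx => by
      obtain ⟨T, hT, hxT⟩ := mem_sup.1 (mem_sdiff.1 hx).1
      exact (hsplit T hT (not_disjoint_iff_nonempty_inter.1 (h T hT))).2
        (mem_sdiff.2 ⟨hxT, (mem_sdiff.1 hx).2⟩)) (by rw [hW, hS.card_eq])).symm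
    obtain ⟨v, hv⟩ := hK
    obtain ⟨u, huS, hvu⟩ := hS.exists_not_adj (Finset.disjoint_left.1 hKS hv)
    rw [hSW, mem_sdiff] at huS
    exact hvu (adj_of_mem_inf_of_mem_sup (fun T hT => (hR T hT).isClique) hv huS.1
      fun h => huS.2 (h ▸ hv))
  have hsub : R ⊆ {T₀, T₁} := by
    intro T hT
    have hTS : T \ K ⊆ S ∨ Disjoint (T \ K) S := by
      rcases disjoint_or_nonempty_inter T S with h | h
      · exact Or.inr (h.mono_left sdiff_subset)
      · exact Or.inl (hsplit T hT h).2
    have key := eq_or_eq_of_subset_or_disjoint (hW.trans hK_half.symm).le (hTKW T₀ hT₀)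
      (hTKW T₁ hT₁) (hTKW T hT) (hsplit T₀ hT₀ hT₀S).2 (hT₁S.mono_left sdiff_subset)
      (hTK T₀ hT₀) (hTK T₁ hT₁) (hTK T hT) hTS
    rw [mem_insert, mem_singleton, ← sdiff_union_of_subset (hKT T hT),
      ← sdiff_union_of_subset (hKT T₀ hT₀), ← sdiff_union_of_subset (hKT T₁ hT₁)]
    rcases key with h | h <;> rw [h] <;> simp
  exact (card_le_card hsub).trans card_le_two

lemma inter_eq_sdiff_of_disjoint [DecidableRel G.Adj]
    (hω : 2 * (G.maxDegree + 1) ≤ 3 * G.cliqueNum) {A B C : Finset V}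
    (hA : G.IsNClique G.cliqueNum A) (hB : G.IsNClique G.cliqueNum B)
    (hC : G.IsNClique G.cliqueNum C) (hAB : (A ∩ B).Nonempty) (hAC : (A ∩ C).Nonempty)
    (hBC : Disjoint B C) : A ∩ C = A \ (A ∩ B) := by
  have := cliqueNum_le_two_mul_card_inter hω hA hB hAB
  have := cliqueNum_le_two_mul_card_inter hω hA hC hAC
  exact eq_sdiff_of_disjoint_of_card_le_add inter_subset_left inter_subset_left
    (hBC.mono inter_subset_right inter_subset_right) (by rw [hA.card_eq]; omega)

lemma two_mul_card_inter_eq_cliqueNum_of_disjoint [DecidableRel G.Adj]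
    (hω : 2 * (G.maxDegree + 1) ≤ 3 * G.cliqueNum) {A B C : Finset V}
    (hA : G.IsNClique G.cliqueNum A) (hB : G.IsNClique G.cliqueNum B)
    (hC : G.IsNClique G.cliqueNum C) (hAB : (A ∩ B).Nonempty) (hAC : (A ∩ C).Nonempty)
    (hBC : Disjoint B C) : 2 * #(A ∩ B) = G.cliqueNum := by
  have h := congrArg card (inter_eq_sdiff_of_disjoint hω hA hB hC hAB hAC hBC)
  rw [card_sdiff_of_subset inter_subset_left, hA.card_eq] at h
  have := card_le_card (inter_subset_left : A ∩ B ⊆ A)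
  have := cliqueNum_le_two_mul_card_inter hω hA hB hAB
  have := cliqueNum_le_two_mul_card_inter hω hA hC hAC
  rw [hA.card_eq] at *
  omega

end SimpleGraph

namespace interGraph

open SimpleGraph

variable {V : Type*} [DecidableEq V] {Q : Finset (Finset V)}

lemma exists_inter_nonempty_of_subset_of_ne (hconn : (interGraph Q).Connected)
    {R : Finset (Finset V)} (hRQ : R ⊆ Q) (hR : R.Nonempty) (hRQ' : R ≠ Q) :
    ∃ T ∈ R, ∃ S ∈ Q, S ∉ R ∧ (T ∩ S).Nonempty := by
  obtain ⟨S₀, hS₀Q, hS₀R⟩ := exists_of_ssubset (ssubset_of_subset_of_ne hRQ hRQ')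
  obtain ⟨T₀, hT₀⟩ := hR
  obtain ⟨p⟩ := hconn.preconnected ⟨S₀, hS₀Q⟩ ⟨T₀, hRQ hT₀⟩
  obtain ⟨d, -, hS, hT⟩ := p.exists_boundary_dart {X | X.1 ∉ R} hS₀R (by simpa using hT₀)
  refine ⟨d.snd, by simpa using hT, d.fst, d.fst.2, hS, ?_⟩
  rw [inter_comm]
  exact d.adj.2

variable [Fintype V] {G : SimpleGraph V} [DecidableRel G.Adj]

lemma card_le_two_of_inf_nonempty (hω : 2 * (G.maxDegree + 1) ≤ 3 * G.cliqueNum)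
    (hQ : ∀ s ∈ Q, G.IsNClique G.cliqueNum s) (hconn : (interGraph Q).Connected)
    (hQK : ¬(Q.inf id).Nonempty) {R : Finset (Finset V)} (hRQ : R ⊆ Q)
    (hR : (R.inf id).Nonempty) : #R ≤ 2 := by
  obtain ⟨M, hM, hMmax⟩ := exists_max_image {R ∈ Q.powerset | (R.inf id).Nonempty} card
    ⟨R, mem_filter.2 ⟨mem_powerset.2 hRQ, hR⟩⟩
  rw [mem_filter, mem_powerset] at hM
  refine (hMmax R (mem_filter.2 ⟨mem_powerset.2 hRQ, hR⟩)).trans ?_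
  obtain rfl | hMne := M.eq_empty_or_nonempty
  · simp
  obtain ⟨T, hT, S, hSQ, hSM, hTS⟩ :=
    exists_inter_nonempty_of_subset_of_ne hconn hM.1 hMne fun h => hQK (h ▸ hM.2)
  have hKS : Disjoint (M.inf id) S := by
    rw [disjoint_iff_inter_eq_empty, ← not_nonempty_iff_eq_empty]
    intro h
    have := hMmax (insert S M) (mem_filter.2 ⟨mem_powerset.2 (insert_subset hSQ hM.1),
      by rwa [inf_insert, id, inf_eq_inter, inter_comm]⟩)
    rw [card_insert_of_notMem hSM] at this
    omega
  exact card_le_two_of_disjoint_inf hω (fun T hT => hQ T (hM.1 hT)) hM.2 (hQ S hSQ) hKS hT hTS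

lemma disjoint_of_adj_of_adj (hω : 2 * (G.maxDegree + 1) ≤ 3 * G.cliqueNum)
    (hQ : ∀ s ∈ Q, G.IsNClique G.cliqueNum s) (hconn : (interGraph Q).Connected)
    (hQK : ¬(Q.inf id).Nonempty) {A B C : {s // s ∈ Q}} (hAB : (interGraph Q).Adj A B)
    (hAC : (interGraph Q).Adj A C) (hBC : B ≠ C) : Disjoint (B : Finset V) C := by
  rw [disjoint_iff_inter_eq_empty, ← not_nonempty_iff_eq_empty]
  intro hBC'
  have hABC := inter_inter_nonempty_of_pairwise hω (hQ _ A.2) (hQ _ B.2) (hQ _ C.2) hAB.2 hAC.2 hBC'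
  have h3 : #{A.1, B.1, C.1} = 3 := card_eq_three.2 ⟨_, _, _, Subtype.coe_injective.ne hAB.1,
    Subtype.coe_injective.ne hAC.1, Subtype.coe_injective.ne hBC, rfl⟩
  have := card_le_two_of_inf_nonempty hω hQ hconn hQK (R := {A.1, B.1, C.1})
    (by simp [insert_subset_iff]) (by simpa [inf_insert, inter_assoc] using hABC)
  omega

lemma degree_le_two (hω : 2 * (G.maxDegree + 1) ≤ 3 * G.cliqueNum)
    (hQ : ∀ s ∈ Q, G.IsNClique G.cliqueNum s) (hconn : (interGraph Q).Connected)
    (hQK : ¬(Q.inf id).Nonempty) (A : {s // s ∈ Q}) : (interGraph Q).degree A ≤ 2 := by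
  by_contra! h
  rw [← card_neighborFinset_eq_degree] at h
  obtain ⟨B, hB, C, hC, D, hD, hBC, hBD, hCD⟩ := two_lt_card.1 h
  rw [mem_neighborFinset] at hB hC hD
  -- both `A ∩ C` and `A ∩ D` are the complement of `A ∩ B` in `A`
  have hAC := inter_eq_sdiff_of_disjoint hω (hQ _ A.2) (hQ _ B.2) (hQ _ C.2) hB.2 hC.2
    (disjoint_of_adj_of_adj hω hQ hconn hQK hB hC hBC)
  have hAD := inter_eq_sdiff_of_disjoint hω (hQ _ A.2) (hQ _ B.2) (hQ _ D.2) hB.2 hD.2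
    (disjoint_of_adj_of_adj hω hQ hconn hQK hB hD hBD)
  obtain ⟨x, hxC⟩ := hC.2
  have hxD : x ∈ A.1 ∩ D.1 := hAD ▸ hAC ▸ hxC
  exact Finset.disjoint_left.1 (disjoint_of_adj_of_adj hω hQ hconn hQK hC hD hCD)
    (mem_inter.1 hxC).2 (mem_inter.1 hxD).2

end interGraph

/-- Christofides–Edwards–King: if `ω(G) ≥ (2/3)(Δ(G)+1)` and `Q` is a collection of
maximum cliques of `G` with `X_Q` connected, then either `⋂ Q ≠ ∅`, or `X_Q` has
maximum degree at most `2` and any two distinct neighbors `B, C` of a clique `A` in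
`X_Q` satisfy `B ∩ C = ∅` and `|A ∩ B| = |A ∩ C| = ω(G)/2`. -/
theorem two_thirds_equality_structure {V : Type*} [Fintype V] [DecidableEq V]
    (G : SimpleGraph V) [DecidableRel G.Adj]
    (hω : 3 * G.cliqueNum ≥ 2 * (G.maxDegree + 1))
    (Q : Finset (Finset V)) (hQ : ∀ s ∈ Q, G.IsNClique G.cliqueNum s)
    (hconn : (interGraph Q).Connected) :
    (⋂ s ∈ Q, ((s : Finset V) : Set V)).Nonempty ∨
      ((interGraph Q).maxDegree ≤ 2 ∧
        ∀ A B C : {s // s ∈ Q}, (interGraph Q).Adj A B → (interGraph Q).Adj A C → B ≠ C →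
          ((B : Finset V) ∩ (C : Finset V) = ∅ ∧
            2 * ((A : Finset V) ∩ (B : Finset V)).card = G.cliqueNum ∧
            2 * ((A : Finset V) ∩ (C : Finset V)).card = G.cliqueNum)) := by
  by_cases hQK : (Q.inf id).Nonempty
  · obtain ⟨x, hx⟩ := hQK
    exact Or.inl ⟨x, Set.mem_iInter₂.2 fun s hs => mem_inf.1 hx s hs⟩
  refine Or.inr ⟨maxDegree_le_of_forall_degree_le _ _ (interGraph.degree_le_two hω hQ hconn hQK),
    fun A B C hAB hAC hBC => ?_⟩
  have hBC' := interGraph.disjoint_of_adj_of_adj hω hQ hconn hQK hAB hAC hBC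
  exact ⟨disjoint_iff_inter_eq_empty.1 hBC',
    two_mul_card_inter_eq_cliqueNum_of_disjoint hω (hQ _ A.2) (hQ _ B.2) (hQ _ C.2) hAB.2 hAC.2
      hBC',
    two_mul_card_inter_eq_cliqueNum_of_disjoint hω (hQ _ A.2) (hQ _ C.2) (hQ _ B.2) hAC.2 hAB.2
      hBC'.symm⟩
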